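/- arXiv:math/0506398 — 4 statements merged into one kernel-verified Lean document; each statement's English description precedes it below -/
import Mathlib

section
/- Let (G_n)_{n≥0} and (s_n)_{n≥0} be real sequences with s_n → 0 as n → ∞. For ε ≥ 0 define L_ε := {n ∈ ℕ : G_n ≥ ε} and S_ε := {n ∈ ℕ : |G_n| < ε}. Suppose the natural densities d(L_ε) exist for all ε ≥ 0 and d(S_ε) exist for all ε > 0, and that lim_{ε→0+} d(L_ε) = d(L_0) and lim_{ε→0+} d(S_ε) = 0. Then the natural density of {n ∈ ℕ : G_n > s_n} exists and equals d(L_0). -/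
/-!
For every `ε > 0` we eventually have `|s n| < ε`, and from then on
`{ε ≤ G} ⊆ {s < G} ⊆ {-ε < G}`, where `{-ε < G}` is the disjoint union of `{ε ≤ G}` and
`{|G| < ε}`. Hence the counting ratio of `{s < G}` is squeezed between quantities tending to
`d(L_ε)` and `d(L_ε) + d(S_ε)`, and both tend to `d(L_0)` as `ε → 0+`.
-/

open Filter Topology

/-- A set `A ⊆ ℕ` has natural density `δ` if `#{n ≤ x : n ∈ A}/x → δ` as `x → ∞`. -/
def HasNatDensity (A : Set ℕ) (δ : ℝ) : Prop :=
  Filter.Tendsto (fun x : ℕ => ((A ∩ Set.Iic x).ncard : ℝ) / x) Filter.atTop (nhds δ)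

noncomputable def natDensityRatio (A : Set ℕ) (x : ℕ) : ℝ :=
  ((A ∩ Set.Iic x).ncard : ℝ) / x

theorem hasNatDensity_iff {A : Set ℕ} {δ : ℝ} :
    HasNatDensity A δ ↔ Tendsto (natDensityRatio A) atTop (𝓝 δ) :=
  Iff.rfl

theorem ncard_inter_Iic_le_add {A B : Set ℕ} {N : ℕ} (h : ∀ n, N ≤ n → n ∈ A → n ∈ B)
    (x : ℕ) : (A ∩ Set.Iic x).ncard ≤ (B ∩ Set.Iic x).ncard + N := by
  have hsub : A ∩ Set.Iic x ⊆ (B ∩ Set.Iic x) ∪ Set.Iio N := by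
    rintro n ⟨hnA, hnx⟩
    by_cases hn : N ≤ n
    · exact Or.inl ⟨h n hn hnA, hnx⟩
    · exact Or.inr (not_le.mp hn)
  calc (A ∩ Set.Iic x).ncard
      ≤ ((B ∩ Set.Iic x) ∪ Set.Iio N).ncard := Set.ncard_le_ncard hsub
    _ ≤ (B ∩ Set.Iic x).ncard + (Set.Iio N).ncard := Set.ncard_union_le _ _
    _ = (B ∩ Set.Iic x).ncard + N := by rw [Set.ncard_Iio_nat]

theorem natDensityRatio_le_add {A B : Set ℕ} {N : ℕ} (h : ∀ n, N ≤ n → n ∈ A → n ∈ B)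
    (x : ℕ) : natDensityRatio A x ≤ natDensityRatio B x + N / x := by
  have hcard : ((A ∩ Set.Iic x).ncard : ℝ) ≤ (B ∩ Set.Iic x).ncard + N := by
    exact_mod_cast ncard_inter_Iic_le_add h x
  rw [natDensityRatio, natDensityRatio, ← add_div]
  exact div_le_div_of_nonneg_right hcard x.cast_nonneg

theorem natDensityRatio_union {A B : Set ℕ} (hAB : Disjoint A B) (x : ℕ) :
    natDensityRatio (A ∪ B) x = natDensityRatio A x + natDensityRatio B x := by
  rw [natDensityRatio, Set.union_inter_distrib_right,
    Set.ncard_union_eq (hAB.mono Set.inter_subset_left Set.inter_subset_left), Nat.cast_add,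
    add_div, natDensityRatio, natDensityRatio]

theorem setOf_neg_lt_eq_union {α : Type*} (f : α → ℝ) {ε : ℝ} (hε : 0 < ε) :
    {x | -ε < f x} = {x | ε ≤ f x} ∪ {x | |f x| < ε} := by
  ext x
  simp only [Set.mem_ofPred_eq, Set.mem_union, abs_lt]
  refine ⟨fun h => (le_or_gt ε (f x)).imp_right fun h' => ⟨h, h'⟩, ?_⟩
  rintro (h | h)
  · linarith
  · exact h.1

theorem disjoint_setOf_le_setOf_abs_lt {α : Type*} (f : α → ℝ) (ε : ℝ) :
    Disjoint {x | ε ≤ f x} {x | |f x| < ε} :=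
  Set.disjoint_left.mpr fun _ (h : ε ≤ _) (h' : |_| < ε) => (le_abs_self _).not_gt (h'.trans_le h)

namespace HasNatDensity

variable {A B : Set ℕ} {a b : ℝ}

theorem union (hAB : Disjoint A B) (hA : HasNatDensity A a) (hB : HasNatDensity B b) :
    HasNatDensity (A ∪ B) (a + b) := by
  rw [hasNatDensity_iff, funext (natDensityRatio_union hAB)]
  exact hA.add hB

theorem eventually_natDensityRatio_lt (hB : HasNatDensity B b) (hAB : A ≤ᶠ[atTop] B) {c : ℝ}
    (hc : b < c) : ∀ᶠ x in atTop, natDensityRatio A x < c := by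
  obtain ⟨N, hN⟩ := eventually_atTop.mp hAB
  have hlim : Tendsto (fun x : ℕ => natDensityRatio B x + N / x) atTop (𝓝 b) := by
    simpa using (hasNatDensity_iff.mp hB).add (tendsto_const_div_atTop_nhds_zero_nat (N : ℝ))
  filter_upwards [hlim.eventually (gt_mem_nhds hc)] with x hx
  exact (natDensityRatio_le_add hN x).trans_lt hx

theorem eventually_lt_natDensityRatio (hA : HasNatDensity A a) (hAB : A ≤ᶠ[atTop] B) {c : ℝ}
    (hc : c < a) : ∀ᶠ x in atTop, c < natDensityRatio B x := by
  obtain ⟨N, hN⟩ := eventually_atTop.mp hAB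
  have hlim : Tendsto (fun x : ℕ => natDensityRatio A x - N / x) atTop (𝓝 a) := by
    simpa using (hasNatDensity_iff.mp hA).sub (tendsto_const_div_atTop_nhds_zero_nat (N : ℝ))
  filter_upwards [hlim.eventually (lt_mem_nhds hc)] with x hx
  linarith [natDensityRatio_le_add hN x]

theorem of_squeeze {ι : Type*} {l : Filter ι} [l.NeBot] {T : Set ℕ} {A B : ι → Set ℕ}
    {a b : ι → ℝ} {δ : ℝ}
    (hA : ∀ᶠ i in l, HasNatDensity (A i) (a i) ∧ A i ≤ᶠ[atTop] T)
    (hB : ∀ᶠ i in l, HasNatDensity (B i) (b i) ∧ T ≤ᶠ[atTop] B i)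
    (ha : Tendsto a l (𝓝 δ)) (hb : Tendsto b l (𝓝 δ)) : HasNatDensity T δ := by
  refine tendsto_order.2 ⟨fun c hc => ?_, fun c hc => ?_⟩
  · obtain ⟨i, ⟨hAi, hAT⟩, hci⟩ := (hA.and (ha.eventually (lt_mem_nhds hc))).exists
    exact hAi.eventually_lt_natDensityRatio hAT hci
  · obtain ⟨i, ⟨hBi, hTB⟩, hci⟩ := (hB.and (hb.eventually (gt_mem_nhds hc))).exists
    exact hBi.eventually_natDensityRatio_lt hTB hci

end HasNatDensity

theorem density_of_perturbed_positivity_set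
    (G s : ℕ → ℝ) (hs : Filter.Tendsto s Filter.atTop (nhds 0))
    (δL : ℝ → ℝ) (δS : ℝ → ℝ)
    (hL : ∀ ε : ℝ, 0 ≤ ε → HasNatDensity {n : ℕ | ε ≤ G n} (δL ε))
    (hS : ∀ ε : ℝ, 0 < ε → HasNatDensity {n : ℕ | |G n| < ε} (δS ε))
    (hLlim : Filter.Tendsto δL (nhdsWithin 0 (Set.Ioi 0)) (nhds (δL 0)))
    (hSlim : Filter.Tendsto δS (nhdsWithin 0 (Set.Ioi 0)) (nhds 0)) :
    HasNatDensity {n : ℕ | s n < G n} (δL 0) := by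
  have hpos : ∀ᶠ ε in 𝓝[>] (0 : ℝ), 0 < ε := eventually_mem_nhdsWithin
  refine HasNatDensity.of_squeeze (A := fun ε => {n | ε ≤ G n}) (B := fun ε => {n | -ε < G n})
    (b := fun ε => δL ε + δS ε) ?_ ?_ hLlim (by simpa using hLlim.add hSlim)
  · filter_upwards [hpos] with ε hε
    refine ⟨hL ε hε.le, ?_⟩
    filter_upwards [hs.eventually (gt_mem_nhds hε)] with n hsn (hGn : ε ≤ G n)
    exact hsn.trans_le hGn
  · filter_upwards [hpos] with ε hε
    refine ⟨setOf_neg_lt_eq_union G hε ▸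
      (hL ε hε.le).union (disjoint_setOf_le_setOf_abs_lt G ε) (hS ε hε), ?_⟩
    filter_upwards [hs.eventually (lt_mem_nhds (neg_lt_zero.mpr hε))] with n hsn (hGn : s n < G n)
    exact hsn.trans hGn
end

section
/- Let θ_1, ..., θ_d be rational numbers in the open interval (0,1), and let a_1, ..., a_d, β_1, ..., β_d be real numbers such that the purely periodic sequence u_n = Σ_{i=1}^d a_i cos(2π θ_i n + β_i) is not identically zero. Then the sequence (u_n) attains a strictly positive value and a strictly negative value, i.e. there exist n, n' ∈ ℕ with u_n > 0 and u_{n'} < 0. -/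
/-!
Let `N` be a common multiple of the denominators of the `θ i`. Each term `cos (2πθ n + β)` is
then `N`-periodic in `n`, and its sum over a period is the real part of a full geometric sum of
the `N`-th root of unity `exp (2πiθ)`, which vanishes because `θ ∉ ℤ`. So `u` is `N`-periodic
with zero sum over a period; as it does not vanish identically, it takes both signs.
-/

open Real Finset Function

theorem Function.Periodic.exists_pos_and_neg_of_sum_range_eq_zero {u : ℕ → ℝ} {N : ℕ}
    (hper : Periodic u N) (hN : 0 < N) (hsum : ∑ n ∈ range N, u n = 0) (hne : ∃ n, u n ≠ 0) :
    (∃ n, 0 < u n) ∧ ∃ n, u n < 0 := by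
  obtain ⟨n₀, hn₀⟩ := hne
  have hmem : n₀ % N ∈ range N := mem_range.2 (Nat.mod_lt _ hN)
  have hne' : u (n₀ % N) ≠ 0 := by rwa [hper.map_mod_nat]
  obtain ⟨p, -, hp⟩ := exists_pos_of_sum_zero_of_exists_nonzero u hsum ⟨_, hmem, hne'⟩
  obtain ⟨q, -, hq⟩ := exists_pos_of_sum_zero_of_exists_nonzero (-u)
    (by simp only [Pi.neg_apply, sum_neg_distrib, hsum, neg_zero]) ⟨_, hmem, neg_ne_zero.2 hne'⟩
  exact ⟨⟨p, hp⟩, q, neg_pos.1 hq⟩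

theorem Rat.exists_int_cast_mul_eq_of_den_dvd {q : ℚ} {N : ℕ} (h : q.den ∣ N) :
    ∃ m : ℤ, (q : ℝ) * N = m := by
  obtain ⟨k, rfl⟩ := h
  refine ⟨q.num * k, ?_⟩
  have hq : (q : ℝ) * q.den = q.num := by exact_mod_cast q.mul_den_eq_num
  push_cast
  rw [← hq]
  ring

section CosineSum

variable {θ : ℝ} {N : ℕ} {m : ℤ}

theorem periodic_cos_two_pi_mul_natCast (hm : θ * N = m) (β : ℝ) :
    Periodic (fun n : ℕ => cos (2 * π * θ * n + β)) N := fun n => by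
  have : 2 * π * θ * ↑(n + N) + β = 2 * π * θ * n + β + m * (2 * π) := by
    push_cast
    rw [← hm]
    ring
  simp only [this, cos_add_int_mul_two_pi]

theorem sum_range_cos_two_pi_mul_natCast_eq_zero (hθ : ∀ k : ℤ, θ ≠ k) (hm : θ * N = m)
    (β : ℝ) : ∑ n ∈ range N, cos (2 * π * θ * n + β) = 0 := by
  set z := Complex.exp (↑(2 * π * θ) * Complex.I)
  have hz : z ≠ 1 := fun h => by
    obtain ⟨k, hk⟩ := Complex.exp_eq_one_iff.1 h
    refine hθ k (mul_left_cancel₀ two_pi_pos.ne' ?_)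
    have : ((2 * π * θ : ℝ) : ℂ) = ((k * (2 * π) : ℝ) : ℂ) := by
      refine mul_right_cancel₀ Complex.I_ne_zero (hk.trans ?_)
      push_cast
      ring
    linear_combination Complex.ofReal_injective this
  have hzN : z ^ N = 1 := by
    rw [← Complex.exp_nat_mul, ← Complex.exp_int_mul_two_pi_mul_I m]
    congr 1
    have : (m : ℂ) = (θ : ℂ) * N := by exact_mod_cast hm.symm
    push_cast [this]
    ring
  have hterm : ∀ n : ℕ, cos (2 * π * θ * n + β) = (z ^ n * Complex.exp (β * Complex.I)).re := by
    intro n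
    rw [← Complex.exp_nat_mul, ← Complex.exp_add, ← Complex.exp_ofReal_mul_I_re]
    push_cast
    ring_nf
  simp only [hterm, ← Complex.re_sum, ← sum_mul, geom_sum_eq hz, hzN, sub_self, zero_div,
    zero_mul, Complex.zero_re]

end CosineSum

theorem rational_trigonometric_sum_attains_pos_and_neg
    (d : ℕ) (θ : Fin d → ℚ) (hθ : ∀ i, 0 < θ i ∧ θ i < 1)
    (a β : Fin d → ℝ) (u : ℕ → ℝ)
    (hu : ∀ n : ℕ, u n = ∑ i : Fin d, a i * Real.cos (2 * π * (θ i : ℝ) * n + β i))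
    (hune : ∃ n : ℕ, u n ≠ 0) :
    (∃ n : ℕ, 0 < u n) ∧ (∃ n' : ℕ, u n' < 0) := by
  set N := ∏ i, (θ i).den
  have hN : 0 < N := prod_pos fun i _ => (θ i).den_pos
  choose m hm using fun i : Fin d =>
    Rat.exists_int_cast_mul_eq_of_den_dvd (dvd_prod_of_mem (fun j => (θ j).den) (mem_univ i))
  have hθ_notInt : ∀ i (k : ℤ), (θ i : ℝ) ≠ k := fun i k h => by
    have := hθ i
    rw [show θ i = k by exact_mod_cast h] at this
    norm_cast at this
    omega
  obtain rfl := funext hu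
  refine Periodic.exists_pos_and_neg_of_sum_range_eq_zero ?_ hN ?_ hune
  · exact fun n => sum_congr rfl fun i _ =>
      congrArg (a i * ·) (periodic_cos_two_pi_mul_natCast (hm i) (β i) n)
  · rw [sum_comm]
    exact sum_eq_zero fun i _ => by
      rw [← mul_sum, sum_range_cos_two_pi_mul_natCast_eq_zero (hθ_notInt i) (hm i), mul_zero]
end

section
/- Let κ be a real number and r a rational number with 0 ≤ κ ≤ 1, 0 ≤ r ≤ 1 and κ + r ≤ 1. Then there exists a real recurrence sequence (f_n)_{n≥0} such that the natural density of {n ∈ ℕ : f_n > 0} exists and equals κ, and the natural density of {n ∈ ℕ : f_n = 0} exists and equals r. -/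
/-- A real sequence satisfying a linear recurrence with constant real coefficients. -/
def IsLinearRecurrence (f : ℕ → ℝ) : Prop :=
  ∃ h : ℕ, 0 < h ∧ ∃ c : Fin h → ℝ, ∀ n : ℕ, f (n + h) = ∑ k : Fin h, c k * f (n + k)


open Finset Filter Real

lemma ncard_inter_Iic (Q : ℕ → Prop) [DecidablePred Q] (x : ℕ) :
    ({n | Q n} ∩ Set.Iic x).ncard = ((Finset.range (x+1)).filter Q).card := by
  rw [← Set.ncard_coe_finset]
  congr 1
  ext n
  simp [Nat.lt_succ_iff, and_comm]

lemma tendsto_div_of_linear_bound (a : ℕ → ℕ) (δ C : ℝ)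
    (h : ∀ x : ℕ, |(a x : ℝ) - δ * x| ≤ C) :
    Filter.Tendsto (fun x : ℕ => (a x : ℝ) / x) Filter.atTop (nhds δ) := by
  have h0 : Filter.Tendsto (fun x : ℕ => (a x : ℝ) / x - δ) Filter.atTop (nhds 0) := by
    apply squeeze_zero_norm' (a := fun x : ℕ => C / x)
    · filter_upwards [Filter.eventually_ge_atTop 1] with x hx
      have hx0 : (0:ℝ) < x := by exact_mod_cast hx
      have heq : (a x : ℝ) / x - δ = ((a x : ℝ) - δ * x) / x := by
        field_simp
      rw [heq, Real.norm_eq_abs, abs_div, abs_of_pos hx0]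
      gcongr
      exact h x
    · exact tendsto_const_div_atTop_nhds_zero_nat C
  have h2 := h0.add (tendsto_const_nhds (x := δ) (f := Filter.atTop))
  simpa using h2

lemma hasNatDensity_of_linear_bound (Q : ℕ → Prop) [DecidablePred Q] (δ C : ℝ)
    (hδ : 0 ≤ δ)
    (h : ∀ N : ℕ, |(((Finset.range N).filter Q).card : ℝ) - δ * N| ≤ C) :
    HasNatDensity {n | Q n} δ := by
  unfold HasNatDensity
  have hx : ∀ x : ℕ, (({n | Q n} ∩ Set.Iic x).ncard : ℝ) = (((Finset.range (x+1)).filter Q).card : ℝ) := by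
    intro x; rw [ncard_inter_Iic]
  simp only [hx]
  apply tendsto_div_of_linear_bound (fun x => ((Finset.range (x+1)).filter Q).card) δ (C + δ)
  intro x
  have h1 := h (x+1)
  push_cast at h1 ⊢
  set A : ℝ := (((Finset.range (x+1)).filter Q).card : ℝ)
  have heq : A - δ*x = (A - δ*(x+1)) + δ := by ring
  rw [heq]
  calc |(A - δ*(x+1)) + δ| ≤ |A - δ*(x+1)| + |δ| := abs_add_le _ _
    _ ≤ C + δ := by rw [abs_of_nonneg hδ]; linarith
lemma prod_count (q : ℕ) (hq : 0 < q) (J T : ℕ → Prop) [DecidablePred J] [DecidablePred T]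
    (M : ℕ) :
    ((Finset.range (q*M)).filter (fun n => J (n % q) ∧ T (n / q))).card
      = ((Finset.range q).filter J).card * ((Finset.range M).filter T).card := by
  rw [← Finset.card_product]
  apply Finset.card_nbij' (fun n => (n % q, n / q)) (fun p => q * p.2 + p.1)
  · intro n hn
    simp only [Finset.mem_coe, Finset.mem_filter, Finset.mem_range] at hn
    obtain ⟨hnr, hJ, hT⟩ := hn
    simp only [Finset.mem_coe, Finset.mem_product, Finset.mem_filter, Finset.mem_range]
    exact ⟨⟨Nat.mod_lt n hq, hJ⟩, Nat.div_lt_of_lt_mul (by omega), hT⟩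
  · rintro ⟨j, m⟩ hp
    simp only [Finset.mem_coe, Finset.mem_product, Finset.mem_filter, Finset.mem_range] at hp
    obtain ⟨⟨hjq, hJ⟩, hm, hT⟩ := hp
    have h1 : (q * m + j) % q = j := by
      rw [Nat.mul_add_mod, Nat.mod_eq_of_lt hjq]
    have h2 : (q * m + j) / q = m := by
      rw [Nat.mul_add_div hq, Nat.div_eq_of_lt hjq, Nat.add_zero]
    simp only [Finset.mem_coe, Finset.mem_filter, Finset.mem_range, h1, h2]
    refine ⟨?_, hJ, hT⟩
    calc q * m + j < q * m + q := by omega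
      _ = q * (m + 1) := by ring
      _ ≤ q * M := Nat.mul_le_mul_left q hm
  · intro n _
    exact Nat.div_add_mod n q
  · rintro ⟨j, m⟩ hp
    simp only [Finset.mem_coe, Finset.mem_product, Finset.mem_filter, Finset.mem_range] at hp
    obtain ⟨⟨hjq, _⟩, _, _⟩ := hp
    have h1 : (q * m + j) % q = j := by rw [Nat.mul_add_mod, Nat.mod_eq_of_lt hjq]
    have h2 : (q * m + j) / q = m := by
      rw [Nat.mul_add_div hq, Nat.div_eq_of_lt hjq, Nat.add_zero]
    simp [h1, h2]

lemma prod_count_bound (q : ℕ) (hq : 0 < q) (J T : ℕ → Prop) [DecidablePred J] [DecidablePred T]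
    (θ C : ℝ) (hθ : 0 ≤ θ)
    (hT : ∀ M : ℕ, |(((Finset.range M).filter T).card : ℝ) - θ * M| ≤ C)
    (N : ℕ) :
    |(((Finset.range N).filter (fun n => J (n % q) ∧ T (n / q))).card : ℝ)
      - (((Finset.range q).filter J).card * θ / q) * N|
      ≤ ((Finset.range q).filter J).card * (θ + C) := by
  set s : ℕ := ((Finset.range q).filter J).card with hs
  set M : ℕ := N / q with hM
  have hlow : q * M ≤ N := by rw [hM]; exact Nat.mul_div_le N q
  have hhigh : N < q * (M + 1) := by
    rw [hM, Nat.mul_succ]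
    have h1 := Nat.div_add_mod N q
    have h2 := Nat.mod_lt N hq
    omega
  -- card bounds
  have hmono : ∀ {N₁ N₂ : ℕ}, N₁ ≤ N₂ →
      ((Finset.range N₁).filter (fun n => J (n % q) ∧ T (n / q))).card ≤
      ((Finset.range N₂).filter (fun n => J (n % q) ∧ T (n / q))).card := by
    intro N₁ N₂ hle
    exact Finset.card_le_card (Finset.filter_subset_filter _ (Finset.range_subset_range.mpr hle))
  have hLB : s * ((Finset.range M).filter T).card ≤
      ((Finset.range N).filter (fun n => J (n % q) ∧ T (n / q))).card := by
    rw [← prod_count q hq J T M]; exact hmono hlow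
  have hUB : ((Finset.range N).filter (fun n => J (n % q) ∧ T (n / q))).card ≤
      s * ((Finset.range (M+1)).filter T).card := by
    rw [← prod_count q hq J T (M+1)]; exact hmono (Nat.le_of_lt hhigh)
  -- cast to ℝ
  set cN : ℝ := (((Finset.range N).filter (fun n => J (n % q) ∧ T (n / q))).card : ℝ) with hcN
  set cM : ℝ := (((Finset.range M).filter T).card : ℝ) with hcM
  set cM1 : ℝ := (((Finset.range (M+1)).filter T).card : ℝ) with hcM1
  have hLB' : (s:ℝ) * cM ≤ cN := by rw [hcN, hcM]; exact_mod_cast hLB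
  have hUB' : cN ≤ (s:ℝ) * cM1 := by rw [hcN, hcM1]; exact_mod_cast hUB
  have ht1 := abs_le.mp (hT M)
  have ht2 := abs_le.mp (hT (M+1))
  have hqR : (0:ℝ) < q := by exact_mod_cast hq
  have hMle : (M:ℝ) ≤ (N:ℝ)/q := by
    rw [le_div_iff₀ hqR]
    have : (q:ℝ) * M ≤ N := by exact_mod_cast hlow
    linarith
  have hMge : (N:ℝ)/q ≤ (M:ℝ) + 1 := by
    rw [div_le_iff₀ hqR]
    have : (N:ℝ) < q * (M+1) := by exact_mod_cast hhigh
    linarith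
  have hsnn : (0:ℝ) ≤ s := Nat.cast_nonneg s
  have hCnn : (0:ℝ) ≤ C := le_trans (abs_nonneg _) (hT 0) |>.trans_eq (by push_cast; simp) |> id
  rw [abs_le]
  push_cast at ht2
  constructor
  · -- lower bound: cN ≥ s*cM ≥ s*(θM - C) ≥ s*(θ(N/q - 1) - C)
    have h1 : (s:ℝ) * (θ * M - C) ≤ (s:ℝ) * cM := by
      apply mul_le_mul_of_nonneg_left _ hsnn; linarith [ht1.1]
    have h2 : θ * ((N:ℝ)/q - 1) ≤ θ * M := by
      apply mul_le_mul_of_nonneg_left _ hθ; linarith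
    have : (s:ℝ) * θ / q * N = (s:ℝ) * (θ * ((N:ℝ)/q)) := by field_simp
    rw [this]
    nlinarith [mul_le_mul_of_nonneg_left h2 hsnn]
  · have h1 : (s:ℝ) * cM1 ≤ (s:ℝ) * (θ * (M+1) + C) := by
      apply mul_le_mul_of_nonneg_left _ hsnn; linarith [ht2.2]
    have h2 : θ * ((M:ℝ)+1) ≤ θ * ((N:ℝ)/q + 1) := by
      apply mul_le_mul_of_nonneg_left _ hθ; linarith
    have heq : (s:ℝ) * θ / q * N = (s:ℝ) * (θ * ((N:ℝ)/q)) := by field_simp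
    rw [heq]
    nlinarith [mul_le_mul_of_nonneg_left h2 hsnn]
/-- The Sturmian predicate -/
def Stur (θ : ℝ) (m : ℕ) : Prop := ⌊((m:ℝ)+1)*θ⌋ = ⌊(m:ℝ)*θ⌋ + 1

lemma stur_floor_step (θ : ℝ) (hθ0 : 0 ≤ θ) (hθ1 : θ < 1) (x : ℝ) (hx : 0 ≤ x) :
    ⌊x + θ⌋ = ⌊x⌋ ∨ ⌊x + θ⌋ = ⌊x⌋ + 1 := by
  have h1 : ⌊x⌋ ≤ ⌊x + θ⌋ := Int.floor_le_floor (by linarith)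
  have h2 : ⌊x + θ⌋ ≤ ⌊x⌋ + 1 := by
    have : x + θ < (⌊x⌋ + 1) + 1 := by
      have := Int.lt_floor_add_one x
      push_cast
      linarith
    have h3 : ⌊x + θ⌋ < ⌊x⌋ + 2 := by
      rw [Int.floor_lt]
      push_cast
      linarith [Int.lt_floor_add_one x]
    omega
  omega

lemma stur_count (θ : ℝ) (hθ0 : 0 ≤ θ) (hθ1 : θ < 1) [DecidablePred (Stur θ)] (M : ℕ) :
    (((Finset.range M).filter (Stur θ)).card : ℤ) = ⌊(M:ℝ)*θ⌋ := by
  induction M with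
  | zero => simp
  | succ M ih =>
    rw [Finset.range_add_one, Finset.filter_insert]
    have hstep : ⌊((M:ℝ)+1)*θ⌋ = ⌊(M:ℝ)*θ⌋ ∨ ⌊((M:ℝ)+1)*θ⌋ = ⌊(M:ℝ)*θ⌋ + 1 := by
      have := stur_floor_step θ hθ0 hθ1 ((M:ℝ)*θ) (by positivity)
      rw [add_one_mul]
      tauto
    by_cases hS : Stur θ M
    · rw [if_pos hS, Finset.card_insert_of_notMem (by simp)]
      unfold Stur at hS
      push_cast
      rw [ih, ← hS]
    · rw [if_neg hS, ih]
      unfold Stur at hS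
      have h4 : ⌊((M:ℝ)+1)*θ⌋ = ⌊(M:ℝ)*θ⌋ := by tauto
      push_cast
      rw [h4]

lemma stur_count_bound (θ : ℝ) (hθ0 : 0 ≤ θ) (hθ1 : θ < 1) [DecidablePred (Stur θ)] (M : ℕ) :
    |(((Finset.range M).filter (Stur θ)).card : ℝ) - θ * M| ≤ 1 := by
  have h := stur_count θ hθ0 hθ1 M
  have hcast : (((Finset.range M).filter (Stur θ)).card : ℝ) = ((⌊(M:ℝ)*θ⌋ : ℤ) : ℝ) := by
    exact_mod_cast congrArg (fun z : ℤ => (z : ℝ)) h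
  rw [hcast]
  have h1 := Int.floor_le ((M:ℝ)*θ)
  have h2 := Int.lt_floor_add_one ((M:ℝ)*θ)
  rw [abs_le]
  constructor <;> nlinarith [mul_comm θ (M:ℝ)]
noncomputable def gseq (θ : ℝ) (m : ℕ) : ℝ :=
  -2 * Real.sin (Real.pi * ((m:ℝ)+1) * θ) * Real.sin (Real.pi * (m:ℝ) * θ)

open Real

lemma sin_pi_mul (x : ℝ) (hx : Irrational x) :
    Real.sin (π * x) ≠ 0 ∧ (0 < Real.sin (π * x) ↔ Even ⌊x⌋) := by
  set k : ℤ := ⌊x⌋ with hk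
  set f : ℝ := Int.fract x with hf
  have hf0 : 0 < f := by
    rw [hf, Int.fract_pos]
    exact hx.ne_int ⌊x⌋
  have hf1 : f < 1 := Int.fract_lt_one x
  have hxkf : x = (k:ℝ) + f := by rw [hk, hf]; exact (Int.floor_add_fract x).symm
  have hsin : Real.sin (π * x) = (-1:ℝ)^k * Real.sin (π * f) := by
    have harg : π * x = (k:ℝ) * π - (-(π * f)) := by rw [hxkf]; ring
    rw [harg, Real.sin_int_mul_pi_sub, Real.sin_neg]
    ring
  have hsf : 0 < Real.sin (π * f) :=
    Real.sin_pos_of_pos_of_lt_pi (by positivity) (by nlinarith [Real.pi_pos])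
  rcases Int.even_or_odd k with he | ho
  · have : Real.sin (π * x) = Real.sin (π * f) := by rw [hsin, he.neg_one_zpow, one_mul]
    rw [this]
    exact ⟨ne_of_gt hsf, iff_of_true hsf he⟩
  · have : Real.sin (π * x) = -Real.sin (π * f) := by rw [hsin, ho.neg_one_zpow]; ring
    rw [this]
    exact ⟨ne_of_lt (by linarith), iff_of_false (by linarith) (Int.not_even_iff_odd.mpr ho)⟩

lemma gseq_zero_iff (θ : ℝ) (hθ : Irrational θ) (m : ℕ) : gseq θ m = 0 ↔ m = 0 := by
  constructor
  · intro h
    by_contra hm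
    have h1 : Irrational ((m:ℝ) * θ) := hθ.natCast_mul hm
    have h2 : Irrational (((m:ℝ)+1) * θ) := by
      have : Irrational (((m+1:ℕ):ℝ) * θ) := hθ.natCast_mul (Nat.succ_ne_zero m)
      push_cast at this
      exact this
    have hA := (sin_pi_mul _ h2).1
    have hB := (sin_pi_mul _ h1).1
    unfold gseq at h
    rw [show π * ((m:ℝ)+1) * θ = π * (((m:ℝ)+1) * θ) by ring,
        show π * (m:ℝ) * θ = π * ((m:ℝ) * θ) by ring] at h
    rcases mul_eq_zero.mp h with h' | h'
    · rcases mul_eq_zero.mp h' with h'' | h''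
      · norm_num at h''
      · exact hA h''
    · exact hB h'
  · intro h
    subst h
    unfold gseq
    simp

lemma gseq_pos_iff (θ : ℝ) (hθ : Irrational θ) (hθ0 : 0 < θ) (hθ1 : θ < 1) (m : ℕ) :
    0 < gseq θ m ↔ Stur θ m := by
  rcases Nat.eq_zero_or_pos m with hm | hm
  · subst hm
    have hz : gseq θ 0 = 0 := by unfold gseq; simp
    rw [hz]
    have hfl : ⌊(0:ℝ)*θ⌋ = 0 := by norm_num
    have hfl2 : ⌊((0:ℝ)+1)*θ⌋ = 0 := by
      rw [Int.floor_eq_zero_iff]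
      constructor <;> simp <;> linarith
    unfold Stur
    push_cast
    rw [hfl, hfl2]
    simp
  · have hm0 : m ≠ 0 := Nat.pos_iff_ne_zero.mp hm
    have h1 : Irrational ((m:ℝ) * θ) := hθ.natCast_mul hm0
    have h2 : Irrational (((m:ℝ)+1) * θ) := by
      have : Irrational (((m+1:ℕ):ℝ) * θ) := hθ.natCast_mul (Nat.succ_ne_zero m)
      push_cast at this
      exact this
    obtain ⟨hA0, hApos⟩ := sin_pi_mul _ h2
    obtain ⟨hB0, hBpos⟩ := sin_pi_mul _ h1
    set A := Real.sin (π * (((m:ℝ)+1) * θ)) with hA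
    set B := Real.sin (π * ((m:ℝ) * θ)) with hB
    have hgeq : gseq θ m = -2 * A * B := by
      unfold gseq
      rw [hA, hB]
      congr 2 <;> [skip; ring] <;> congr 1 <;> ring
    have hstep : ⌊((m:ℝ)+1)*θ⌋ = ⌊(m:ℝ)*θ⌋ ∨ ⌊((m:ℝ)+1)*θ⌋ = ⌊(m:ℝ)*θ⌋ + 1 := by
      have := stur_floor_step θ (le_of_lt hθ0) hθ1 ((m:ℝ)*θ) (by positivity)
      rw [add_one_mul]
      tauto
    unfold Stur
    rw [hgeq]
    rcases hstep with h | h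
    · -- same floor: same parity, product same sign, both sides false
      constructor
      · intro hpos
        exfalso
        have hsame : (0 < A ↔ 0 < B) := by rw [hApos, hBpos, h]
        rcases lt_or_gt_of_ne hA0 with hA' | hA'
        · have hB' : ¬ (0 < B) := fun hb => by
            have := hsame.mpr hb; linarith
          have hB'' : B < 0 := lt_of_le_of_ne (not_lt.mp hB') hB0
          nlinarith
        · have hB' : 0 < B := hsame.mp hA'
          nlinarith
      · intro hst
        exfalso
        omega
    · -- floors differ by one: opposite parity, product negative, both sides true
      have hdiff : (0 < A ↔ ¬ (0 < B)) := by
        rw [hApos, hBpos, h, Int.even_add_one]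
      constructor
      · intro _; exact h
      · intro _
        rcases lt_or_gt_of_ne hA0 with hA' | hA'
        · have hB' : 0 < B := by
            by_contra hb
            exact absurd (hdiff.mpr hb) (not_lt.mpr hA'.le)
          nlinarith
        · have hB' : B < 0 := by
            have := hdiff.mp hA'
            exact lt_of_le_of_ne (not_lt.mp this) hB0
          nlinarith

lemma rec3 (u : ℕ → ℝ) (a b : ℝ) (hu : ∀ m, u (m+2) + u m = a * u (m+1)) (m : ℕ) :
    u (m+3) - b = (a+1) * (u (m+2) - b) - (a+1) * (u (m+1) - b) + (u m - b) := by
  have h1 := hu m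
  have h2 := hu (m+1)
  have h3 : m + 1 + 2 = m + 3 := by omega
  rw [h3] at h2
  have h4 : m + 1 + 1 = m + 2 := by omega
  rw [h4] at h2
  linarith

lemma gseq_eq_cos (θ : ℝ) (m : ℕ) :
    gseq θ m = Real.cos (2*π*θ*(m:ℝ) + π*θ) - Real.cos (π*θ) := by
  rw [Real.cos_sub_cos]
  unfold gseq
  congr 2 <;> [skip; ring] <;> congr 1 <;> ring

lemma gseq_rec (θ : ℝ) (m : ℕ) :
    gseq θ (m+3) = (2*Real.cos (2*π*θ)+1) * gseq θ (m+2)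
      - (2*Real.cos (2*π*θ)+1) * gseq θ (m+1) + gseq θ m := by
  set u : ℕ → ℝ := fun m => Real.cos (2*π*θ*(m:ℝ) + π*θ) with hu
  have hrec : ∀ m, u (m+2) + u m = (2*Real.cos (2*π*θ)) * u (m+1) := by
    intro m
    rw [hu]
    simp only
    push_cast
    rw [Real.cos_add_cos]
    have ha : (2 * π * θ * ((m:ℝ) + 2) + π * θ + (2 * π * θ * (m:ℝ) + π * θ)) / 2
        = 2 * π * θ * ((m:ℝ) + 1) + π * θ := by ring
    have hb : (2 * π * θ * ((m:ℝ) + 2) + π * θ - (2 * π * θ * (m:ℝ) + π * θ)) / 2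
        = 2 * π * θ := by ring
    rw [ha, hb]
    ring
  have hg : ∀ m : ℕ, gseq θ m = u m - Real.cos (π*θ) := fun m => gseq_eq_cos θ m
  rw [hg, hg, hg, hg]
  exact rec3 u (2*Real.cos (2*π*θ)) (Real.cos (π*θ)) hrec m
lemma sum_ite_fin {h : ℕ} (F : Fin h → ℝ) (i : Fin h) :
    ∑ k : Fin h, (if (k:ℕ) = (i:ℕ) then F k else 0) = F i := by
  rw [Finset.sum_eq_single i]
  · rw [if_pos rfl]
  · intro b _ hb
    exact if_neg (fun hc => hb (Fin.ext hc))
  · intro hi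
    exact absurd (Finset.mem_univ i) hi

lemma interleave_isLinRec (q : ℕ) (hq : 0 < q) (e : ℕ → ℝ) (g : ℕ → ℝ) (A B C : ℝ)
    (hg : ∀ m, g (m+3) = A * g (m+2) + B * g (m+1) + C * g m) :
    IsLinearRecurrence (fun n => e (n % q) * g (n / q)) := by
  refine ⟨3*q, by omega, ?_⟩
  have h0 : (0:ℕ) < 3*q := by omega
  have h1 : q < 3*q := by omega
  have h2 : 2*q < 3*q := by omega
  set i0 : Fin (3*q) := ⟨0, h0⟩ with hi0
  set i1 : Fin (3*q) := ⟨q, h1⟩ with hi1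
  set i2 : Fin (3*q) := ⟨2*q, h2⟩ with hi2
  refine ⟨fun k => (if (k:ℕ) = (i2:ℕ) then A else 0) + (if (k:ℕ) = (i1:ℕ) then B else 0)
    + (if (k:ℕ) = (i0:ℕ) then C else 0), fun n => ?_⟩
  have hsum : ∀ k : Fin (3*q),
      ((if (k:ℕ) = (i2:ℕ) then A else 0) + (if (k:ℕ) = (i1:ℕ) then B else 0)
        + (if (k:ℕ) = (i0:ℕ) then C else 0)) * (e ((n+(k:ℕ)) % q) * g ((n+(k:ℕ)) / q))
      = (if (k:ℕ) = (i2:ℕ) then A * (e ((n+(k:ℕ)) % q) * g ((n+(k:ℕ)) / q)) else 0)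
        + (if (k:ℕ) = (i1:ℕ) then B * (e ((n+(k:ℕ)) % q) * g ((n+(k:ℕ)) / q)) else 0)
        + (if (k:ℕ) = (i0:ℕ) then C * (e ((n+(k:ℕ)) % q) * g ((n+(k:ℕ)) / q)) else 0) := by
    intro k
    rw [hi0, hi1, hi2]
    simp only
    split_ifs <;> first | ring | omega
  simp only
  rw [Finset.sum_congr rfl (fun k _ => hsum k)]
  rw [Finset.sum_add_distrib, Finset.sum_add_distrib]
  rw [sum_ite_fin (fun k : Fin (3*q) => A * (e ((n+(k:ℕ)) % q) * g ((n+(k:ℕ)) / q))) i2]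
  rw [sum_ite_fin (fun k : Fin (3*q) => B * (e ((n+(k:ℕ)) % q) * g ((n+(k:ℕ)) / q))) i1]
  rw [sum_ite_fin (fun k : Fin (3*q) => C * (e ((n+(k:ℕ)) % q) * g ((n+(k:ℕ)) / q))) i0]
  rw [hi0, hi1, hi2]
  simp only
  have m3 : (n + 3*q) % q = n % q := Nat.add_mul_mod_self_right n 3 q
  have m2 : (n + 2*q) % q = n % q := Nat.add_mul_mod_self_right n 2 q
  have m1 : (n + q) % q = n % q := Nat.add_mod_right n q
  have m0 : (n + 0) % q = n % q := by rw [Nat.add_zero]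
  have d3 : (n + 3*q) / q = n / q + 3 := Nat.add_mul_div_right n 3 hq
  have d2 : (n + 2*q) / q = n / q + 2 := Nat.add_mul_div_right n 2 hq
  have d1 : (n + q) / q = n / q + 1 := Nat.add_div_right n hq
  have d0 : (n + 0) / q = n / q := by rw [Nat.add_zero]
  rw [m3, m2, m1, m0, d3, d2, d1, d0, hg (n / q)]
  ring

lemma periodic_isLinRec (Q : ℕ) (hQ : 0 < Q) (e : ℕ → ℝ) :
    IsLinearRecurrence (fun n => e (n % Q)) := by
  refine ⟨Q, hQ, ?_⟩
  set i0 : Fin Q := ⟨0, hQ⟩ with hi0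
  refine ⟨fun k => if (k:ℕ) = (i0:ℕ) then 1 else 0, fun n => ?_⟩
  have hsum : ∀ k : Fin Q,
      (if (k:ℕ) = (i0:ℕ) then (1:ℝ) else 0) * (e ((n+(k:ℕ)) % Q))
      = (if (k:ℕ) = (i0:ℕ) then e ((n+(k:ℕ)) % Q) else 0) := by
    intro k; split_ifs <;> ring
  simp only
  rw [Finset.sum_congr rfl (fun k _ => hsum k)]
  rw [sum_ite_fin (fun k : Fin Q => e ((n+(k:ℕ)) % Q)) i0]
  rw [hi0]
  simp only [Nat.add_zero]
  rw [Nat.add_mod_right]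

theorem possible_densities_of_positivity_and_zero_sets
    (κ : ℝ) (r : ℚ) (hκ0 : 0 ≤ κ) (hκ1 : κ ≤ 1) (hr0 : 0 ≤ r) (hr1 : r ≤ 1)
    (hκr : κ + (r : ℝ) ≤ 1) :
    ∃ f : ℕ → ℝ, IsLinearRecurrence f ∧
      HasNatDensity {n : ℕ | 0 < f n} κ ∧
      HasNatDensity {n : ℕ | f n = 0} (r : ℝ) := by
  classical
  by_cases hir : Irrational κ
  · -- irrational case
    have hκpos : 0 < κ := by
      rcases hκ0.lt_or_eq with h | h
      · exact h
      · exfalso; rw [← h] at hir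
        exact (Rat.not_irrational 0) (by push_cast at hir ⊢; exact_mod_cast hir)
    have hrlt1 : (r:ℝ) < 1 := by linarith
    set q : ℕ := r.den with hqdef
    have hq : 0 < q := r.pos
    set p : ℕ := r.num.toNat with hpdef
    have hnum : (r.num : ℝ) = (p:ℝ) := by
      rw [hpdef]; exact_mod_cast (Int.toNat_of_nonneg (Rat.num_nonneg.mpr hr0)).symm
    have hrpq : (r:ℝ) = (p:ℝ)/(q:ℝ) := by
      rw [Rat.cast_def, hnum]
    have hqR : (0:ℝ) < q := by exact_mod_cast hq
    have hpq : p < q := by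
      have : (p:ℝ) < q := by
        rw [hrpq, div_lt_one hqR] at hrlt1; exact hrlt1
      exact_mod_cast this
    set s : ℕ := q - p with hsdef
    have hs : 0 < s := by omega
    have hsq : s ≤ q := by omega
    have hsR : (s:ℝ) = (q:ℝ) - (p:ℝ) := by
      rw [hsdef]; push_cast [Nat.cast_sub (le_of_lt hpq)]; ring
    have hsR0 : (0:ℝ) < s := by exact_mod_cast hs
    set θ : ℝ := κ * q / s with hθdef
    have hθ0 : 0 < θ := div_pos (mul_pos hκpos hqR) hsR0
    have hκlt : κ < 1 - (r:ℝ) := by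
      rcases lt_or_eq_of_le (by linarith : κ ≤ 1 - (r:ℝ)) with h | h
      · exact h
      · exfalso
        apply Rat.not_irrational (1-r)
        rw [show (((1 - r : ℚ)):ℝ) = κ from by push_cast; linarith]
        exact hir
    have hθ1 : θ < 1 := by
      rw [hθdef, div_lt_one hsR0]
      rw [hrpq] at hκlt
      rw [hsR]
      have h1 : κ * q < (1 - (p:ℝ)/q) * q := by
        apply mul_lt_mul_of_pos_right hκlt hqR
      calc κ * q < (1 - (p:ℝ)/q) * q := h1
        _ = (q:ℝ) - p := by field_simp
    have hθirr : Irrational θ := by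
      have hqs : ((q:ℚ)/(s:ℚ) : ℚ) ≠ 0 := by
        apply ne_of_gt
        apply div_pos <;> exact_mod_cast (by assumption : 0 < _)
      have h1 : Irrational (κ * (((q:ℚ)/(s:ℚ) : ℚ) : ℝ)) := hir.mul_ratCast hqs
      have h2 : (((q:ℚ)/(s:ℚ) : ℚ) : ℝ) = (q:ℝ)/(s:ℝ) := by push_cast; ring
      rw [h2] at h1
      have h3 : θ = κ * ((q:ℝ)/(s:ℝ)) := by rw [hθdef]; ring
      rw [h3]
      exact h1
    have hκθ : (s:ℝ) * θ / q = κ := by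
      rw [hθdef]
      field_simp
    set e : ℕ → ℝ := fun j => if j < s then (1:ℝ) else 0 with hedef
    set f : ℕ → ℝ := fun n => e (n % q) * gseq θ (n / q) with hfdef
    have hJcard : ((Finset.range q).filter (fun j => j < s)).card = s := by
      have : (Finset.range q).filter (fun j => j < s) = Finset.range s := by
        ext j
        simp only [Finset.mem_filter, Finset.mem_range]
        omega
      rw [this, Finset.card_range]
    refine ⟨f, ?_, ?_, ?_⟩
    · exact interleave_isLinRec q hq e (gseq θ) (2*Real.cos (2*Real.pi*θ)+1)
        (-(2*Real.cos (2*Real.pi*θ)+1)) 1 (fun m => by rw [gseq_rec]; ring)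
    · -- positivity density
      have hset : {n : ℕ | 0 < f n} = {n : ℕ | n % q < s ∧ Stur θ (n / q)} := by
        ext n
        simp only [Set.mem_setOf_eq, hfdef, hedef]
        rcases lt_or_ge (n % q) s with h | h
        · rw [if_pos h, one_mul]
          rw [gseq_pos_iff θ hθirr hθ0 hθ1]
          simp [h]
        · rw [if_neg (not_lt.mpr h), zero_mul]
          exact iff_of_false (lt_irrefl 0) (fun hcon => absurd hcon.1 (not_lt.mpr h))
      rw [hset]
      apply hasNatDensity_of_linear_bound _ κ ((s:ℝ)*(θ+1)) hκ0
      intro N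
      have hb := prod_count_bound q hq (fun j => j < s) (Stur θ) θ 1 hθ0.le
        (stur_count_bound θ hθ0.le hθ1) N
      rw [hJcard] at hb
      have hδ : ((s:ℕ):ℝ) * θ / q * N = κ * N := by rw [hκθ]
      rw [hδ] at hb
      exact hb
    · -- zero density
      have hset : {n : ℕ | f n = 0} = {n : ℕ | s ≤ n % q ∨ n < q} := by
        ext n
        simp only [Set.mem_setOf_eq, hfdef, hedef]
        rw [mul_eq_zero]
        constructor
        · rintro (h | h)
          · left
            by_contra hc
            rw [if_pos (by omega)] at h
            norm_num at h
          · right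
            have := (gseq_zero_iff θ hθirr (n / q)).mp h
            by_contra hc
            push_neg at hc
            have : 1 ≤ n / q := (Nat.one_le_div_iff hq).mpr hc
            omega
        · rintro (h | h)
          · left; rw [if_neg (by omega)]
          · right
            rw [(gseq_zero_iff θ hθirr (n / q))]
            exact Nat.div_eq_of_lt h
      rw [hset]
      apply hasNatDensity_of_linear_bound _ (r:ℝ) ((p:ℝ)*(1+0) + q) (by positivity)
      intro N
      have hTtriv : ∀ M : ℕ, |(((Finset.range M).filter (fun _ : ℕ => True)).card : ℝ) - 1 * M| ≤ 0 := by
        intro M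
        rw [Finset.filter_true_of_mem (fun _ _ => trivial)]
        simp
      have hb := prod_count_bound q hq (fun j => s ≤ j) (fun _ => True) 1 0 zero_le_one hTtriv N
      have hJ0card : ((Finset.range q).filter (fun j => s ≤ j)).card = p := by
        have : (Finset.range q).filter (fun j => s ≤ j) = Finset.Ico s q := by
          ext j
          simp only [Finset.mem_filter, Finset.mem_range, Finset.mem_Ico]
          omega
        rw [this, Nat.card_Ico]
        omega
      rw [hJ0card] at hb
      set c0 : ℕ := ((Finset.range N).filter (fun n => s ≤ n % q ∧ (fun _ : ℕ => True) (n / q))).card with hc0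
      set cZ : ℕ := ((Finset.range N).filter (fun n => s ≤ n % q ∨ n < q)).card with hcZ
      have hlow : c0 ≤ cZ := by
        apply Finset.card_le_card
        intro n hn
        simp only [Finset.mem_filter] at hn ⊢
        exact ⟨hn.1, Or.inl hn.2.1⟩
      have hup : cZ ≤ c0 + q := by
        have hsub : (Finset.range N).filter (fun n => s ≤ n % q ∨ n < q) ⊆
            ((Finset.range N).filter (fun n => s ≤ n % q ∧ (fun _ : ℕ => True) (n / q))) ∪ Finset.range q := by
          intro n hn
          simp only [Finset.mem_filter, Finset.mem_union, Finset.mem_range] at hn ⊢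
          rcases hn.2 with h | h
          · exact Or.inl ⟨hn.1, h, trivial⟩
          · exact Or.inr h
        calc cZ ≤ (((Finset.range N).filter (fun n => s ≤ n % q ∧ (fun _ : ℕ => True) (n / q))) ∪ Finset.range q).card :=
              Finset.card_le_card hsub
          _ ≤ c0 + q := by
              refine le_trans (Finset.card_union_le _ _) ?_
              rw [Finset.card_range]
      have habs := abs_le.mp hb
      have hδq : ((p:ℕ):ℝ) * 1 / q * N = (r:ℝ) * N := by rw [hrpq]; ring
      rw [hδq] at habs
      rw [abs_le]
      have hc0R : (c0:ℝ) ≤ cZ := by exact_mod_cast hlow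
      have hcZR : (cZ:ℝ) ≤ (c0:ℝ) + q := by exact_mod_cast hup
      constructor
      · linarith [habs.1]
      · linarith [habs.2]
  · -- rational case
    have hmem : κ ∈ Set.range ((↑) : ℚ → ℝ) := not_not.mp hir
    obtain ⟨c, hc⟩ := hmem
    have hc0 : 0 ≤ c := by
      have : (0:ℝ) ≤ (c:ℝ) := by rw [hc]; exact hκ0
      exact_mod_cast this
    have hc1 : c ≤ 1 := by
      have : (c:ℝ) ≤ 1 := by rw [hc]; exact hκ1
      exact_mod_cast this
    set Q : ℕ := c.den * r.den with hQdef
    have hQ : 0 < Q := Nat.mul_pos c.pos r.pos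
    have hQR : (0:ℝ) < Q := by exact_mod_cast hQ
    set A : ℕ := c.num.toNat * r.den with hAdef
    set P : ℕ := r.num.toNat * c.den with hPdef
    have hnumc : ((c.num.toNat:ℕ):ℝ) = (c.num:ℝ) := by
      exact_mod_cast Int.toNat_of_nonneg (Rat.num_nonneg.mpr hc0)
    have hnumr : ((r.num.toNat:ℕ):ℝ) = (r.num:ℝ) := by
      exact_mod_cast Int.toNat_of_nonneg (Rat.num_nonneg.mpr hr0)
    have hAR : (A:ℝ) = κ * Q := by
      rw [hAdef, hQdef, ← hc, Rat.cast_def]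
      push_cast
      rw [hnumc]
      have hcden : ((c.den:ℝ)) ≠ 0 := by positivity
      field_simp
    have hPR : (P:ℝ) = (r:ℝ) * Q := by
      rw [hPdef, hQdef, Rat.cast_def]
      push_cast
      rw [hnumr]
      have hrden : ((r.den:ℝ)) ≠ 0 := by positivity
      field_simp
    have hAQ : A ≤ Q := by
      have : (A:ℝ) ≤ Q := by rw [hAR]; nlinarith
      exact_mod_cast this
    have hAPQ : A + P ≤ Q := by
      have : ((A+P:ℕ):ℝ) ≤ Q := by push_cast; rw [hAR, hPR]; nlinarith
      exact_mod_cast this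
    set e : ℕ → ℝ := fun j => if j < A then (1:ℝ) else if j < A + P then 0 else -1 with hedef
    set f : ℕ → ℝ := fun n => e (n % Q) with hfdef
    have hTtriv : ∀ M : ℕ, |(((Finset.range M).filter (fun _ : ℕ => True)).card : ℝ) - 1 * M| ≤ 0 := by
      intro M
      rw [Finset.filter_true_of_mem (fun _ _ => trivial)]
      simp
    refine ⟨f, periodic_isLinRec Q hQ e, ?_, ?_⟩
    · have hset : {n : ℕ | 0 < f n} = {n : ℕ | n % Q < A ∧ (fun _ : ℕ => True) (n / Q)} := by
        ext n
        simp only [Set.mem_setOf_eq, hfdef, hedef, and_true]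
        split_ifs with h1 h2
        · simp [h1]
        · simp [h1]
        · constructor
          · intro h; norm_num at h
          · intro h; omega
      rw [hset]
      apply hasNatDensity_of_linear_bound _ κ ((A:ℝ)*(1+0)) hκ0
      intro N
      have hb := prod_count_bound Q hQ (fun j => j < A) (fun _ => True) 1 0 zero_le_one hTtriv N
      have hJcard : ((Finset.range Q).filter (fun j => j < A)).card = A := by
        have : (Finset.range Q).filter (fun j => j < A) = Finset.range A := by
          ext j
          simp only [Finset.mem_filter, Finset.mem_range]
          omega
        rw [this, Finset.card_range]
      rw [hJcard] at hb
      have hδ : ((A:ℕ):ℝ) * 1 / Q * N = κ * N := by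
        rw [hAR]; field_simp
      rw [hδ] at hb
      exact hb
    · have hset : {n : ℕ | f n = 0} = {n : ℕ | (A ≤ n % Q ∧ n % Q < A + P) ∧ (fun _ : ℕ => True) (n / Q)} := by
        ext n
        simp only [Set.mem_setOf_eq, hfdef, hedef, and_true]
        split_ifs with h1 h2
        · constructor
          · intro h; norm_num at h
          · intro h; omega
        · constructor
          · intro _; omega
          · intro _; rfl
        · constructor
          · intro h; norm_num at h
          · intro h; omega
      rw [hset]
      apply hasNatDensity_of_linear_bound _ (r:ℝ) ((P:ℝ)*(1+0)) (by positivity)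
      intro N
      have hb := prod_count_bound Q hQ (fun j => A ≤ j ∧ j < A + P) (fun _ => True) 1 0 zero_le_one hTtriv N
      have hJcard : ((Finset.range Q).filter (fun j => A ≤ j ∧ j < A + P)).card = P := by
        have : (Finset.range Q).filter (fun j => A ≤ j ∧ j < A + P) = Finset.Ico A (A+P) := by
          ext j
          simp only [Finset.mem_filter, Finset.mem_range, Finset.mem_Ico]
          omega
        rw [this, Nat.card_Ico]
        omega
      rw [hJcard] at hb
      have hδ : ((P:ℕ):ℝ) * 1 / Q * N = (r:ℝ) * N := by
        rw [hPR]; field_simp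
      rw [hδ] at hb
      exact hb
end

section
/- Fix a positive integer m and for (A_1, ..., A_m) ∈ ℝ^m define φ(A_1, ..., A_m) := λ({t ∈ [0,1] : Σ_{j=1}^m A_j cos(2π j t) > 0}), where λ is one-dimensional Lebesgue measure. Then φ is continuous on ℝ^m \ {0}. -/
open Real MeasureTheory Filter Set Topology intervalIntegral


private lemma integral_cos_two_pi_int (n : ℤ) :
    ∫ t in (0:ℝ)..1, Real.cos (2 * π * n * t) = if n = 0 then 1 else 0 := by
  rcases eq_or_ne n 0 with h | h
  · simp [h]
  · have h1 : (n:ℝ) ≠ 0 := Int.cast_ne_zero.2 h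
    have hc : (2 * π * (n:ℝ)) ≠ 0 := by
      have := Real.pi_ne_zero; positivity
    have hsin : Real.sin (2 * π * n) = 0 := by
      rw [show (2 * π * (n:ℝ)) = ((2*n : ℤ):ℝ) * π by push_cast; ring]
      exact Real.sin_int_mul_pi _
    rw [if_neg h, intervalIntegral.integral_comp_mul_left Real.cos hc, integral_cos]
    simp [hsin]

private lemma cos_orth (a b : ℕ) :
    ∫ t in (0:ℝ)..1, Real.cos (2 * π * (a+1) * t) * Real.cos (2 * π * (b+1) * t)
      = if a = b then 1/2 else 0 := by
  have key : ∀ t : ℝ, Real.cos (2 * π * (a+1) * t) * Real.cos (2 * π * (b+1) * t)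
      = (Real.cos (2 * π * (((((a:ℤ)+1) + ((b:ℤ)+1)):ℤ):ℝ) * t)
         + Real.cos (2 * π * (((((a:ℤ)+1) - ((b:ℤ)+1)):ℤ):ℝ) * t)) / 2 := by
    intro t
    have h1 : (2 * π * (((((a:ℤ)+1) + ((b:ℤ)+1)):ℤ):ℝ) * t)
        = (2 * π * (a+1) * t) + (2 * π * (b+1) * t) := by push_cast; ring
    have h2 : (2 * π * (((((a:ℤ)+1) - ((b:ℤ)+1)):ℤ):ℝ) * t)
        = (2 * π * (a+1) * t) - (2 * π * (b+1) * t) := by push_cast; ring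
    rw [h1, h2, Real.cos_add, Real.cos_sub]; ring
  simp_rw [key]
  have ii : ∀ c : ℝ, IntervalIntegrable (fun t => Real.cos (c * t)) volume (0:ℝ) 1 :=
    fun c => (Real.continuous_cos.comp (continuous_const.mul continuous_id)).intervalIntegrable _ _
  rw [intervalIntegral.integral_div, intervalIntegral.integral_add (ii _) (ii _),
    integral_cos_two_pi_int, integral_cos_two_pi_int]
  rcases eq_or_ne a b with h | h
  · subst h
    have h1 : ((a:ℤ)+1) + ((a:ℤ)+1) ≠ 0 := by omega
    simp [h1]
  · have h1 : ((a:ℤ)+1) + ((b:ℤ)+1) ≠ 0 := by omega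
    have h2 : ((a:ℤ)+1) - ((b:ℤ)+1) ≠ 0 := by omega
    simp only [if_neg h1, if_neg h2, if_neg h]
    norm_num

private lemma zero_set_null (m : ℕ) (A : Fin m → ℝ) (hA : A ≠ 0) :
    MeasureTheory.volume {t : ℝ | t ∈ Set.Icc (0:ℝ) 1 ∧
      ∑ j : Fin m, A j * Real.cos (2 * π * ((j : ℕ) + 1) * t) = 0} = 0 := by
  by_contra hvol
  set Z : Set ℝ := {t : ℝ | t ∈ Set.Icc (0:ℝ) 1 ∧
      ∑ j : Fin m, A j * Real.cos (2 * π * ((j : ℕ) + 1) * t) = 0} with hZ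
  -- Z is infinite
  have hZinf : Z.Infinite := by
    intro hfin
    exact hvol (hfin.countable.measure_zero _)
  -- the complex extension
  set H : ℂ → ℂ := fun z => ∑ j : Fin m, (A j : ℂ) * Complex.cos (2 * (π:ℂ) * ((j : ℕ) + 1) * z)
    with hH
  have hdiff : Differentiable ℂ H := by
    apply Differentiable.fun_sum
    intro j _
    exact (Complex.differentiable_cos.comp ((differentiable_id.const_mul _))).const_mul _
  have han : AnalyticOnNhd ℂ H Set.univ :=
    hdiff.differentiableOn.analyticOnNhd isOpen_univ
  -- H vanishes on the image of Z
  have hHZ : ∀ t : ℝ, t ∈ Z → H (t : ℂ) = 0 := by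
    intro t ht
    have h0 : ∑ j : Fin m, A j * Real.cos (2 * π * ((j : ℕ) + 1) * t) = 0 := ht.2
    have : ((∑ j : Fin m, A j * Real.cos (2 * π * ((j : ℕ) + 1) * t) : ℝ) : ℂ) = H (t : ℂ) := by
      push_cast
      rfl
    rw [h0] at this
    exact_mod_cast this.symm
  -- accumulation point
  set Z' : Set ℂ := (fun t : ℝ => (t : ℂ)) '' Z with hZ'
  have hZ'inf : Z'.Infinite :=
    hZinf.image (Complex.ofReal_injective.injOn)
  have hK : IsCompact ((fun t : ℝ => (t : ℂ)) '' Set.Icc 0 1) :=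
    (isCompact_Icc).image Complex.continuous_ofReal
  obtain ⟨z₀, _, hacc⟩ := hZ'inf.exists_accPt_of_subset_isCompact hK
    (Set.image_mono fun t ht => ht.1)
  have hfreq : ∃ᶠ z in 𝓝[≠] z₀, H z = 0 := by
    rw [frequently_nhdsWithin_iff]
    refine (accPt_iff_frequently.1 hacc).mono ?_
    rintro z ⟨hne, hz⟩
    obtain ⟨t, ht, rfl⟩ := hz
    exact ⟨hHZ t ht, hne⟩
  have hH0 : Set.EqOn H 0 Set.univ :=
    han.eqOn_zero_of_preconnected_of_frequently_eq_zero isPreconnected_univ (Set.mem_univ z₀) hfreq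
  -- so the real trig polynomial vanishes identically
  have hg0 : ∀ t : ℝ, ∑ j : Fin m, A j * Real.cos (2 * π * ((j : ℕ) + 1) * t) = 0 := by
    intro t
    have : ((∑ j : Fin m, A j * Real.cos (2 * π * ((j : ℕ) + 1) * t) : ℝ) : ℂ) = H (t : ℂ) := by
      push_cast
      rfl
    have h2 := hH0 (Set.mem_univ (t:ℂ))
    simp only [Pi.zero_apply] at h2
    rw [h2] at this
    exact_mod_cast this
  -- now integrate against cos (2π(k+1)t) to get A k = 0
  obtain ⟨k, hk⟩ := Function.ne_iff.1 hA
  have hint : (∫ t in (0:ℝ)..1,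
      (∑ j : Fin m, A j * Real.cos (2 * π * ((j : ℕ) + 1) * t))
        * Real.cos (2 * π * ((k : ℕ) + 1) * t)) = 0 := by
    have : (fun t : ℝ => (∑ j : Fin m, A j * Real.cos (2 * π * ((j : ℕ) + 1) * t))
        * Real.cos (2 * π * ((k : ℕ) + 1) * t)) = fun _ => 0 := by
      funext t
      rw [hg0 t, zero_mul]
    rw [this, intervalIntegral.integral_zero]
  have hii : ∀ j : Fin m, IntervalIntegrable
      (fun t : ℝ => A j * Real.cos (2 * π * ((j : ℕ) + 1) * t)
        * Real.cos (2 * π * ((k : ℕ) + 1) * t)) volume 0 1 := by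
    intro j
    apply Continuous.intervalIntegrable
    fun_prop
  rw [show (fun t : ℝ => (∑ j : Fin m, A j * Real.cos (2 * π * ((j : ℕ) + 1) * t))
        * Real.cos (2 * π * ((k : ℕ) + 1) * t))
      = fun t : ℝ => ∑ j : Fin m, A j * Real.cos (2 * π * ((j : ℕ) + 1) * t)
        * Real.cos (2 * π * ((k : ℕ) + 1) * t) from funext fun t => Finset.sum_mul ..] at hint
  rw [intervalIntegral.integral_finset_sum (fun j _ => hii j)] at hint
  have heval : ∀ j : Fin m, (∫ t in (0:ℝ)..1,
      A j * Real.cos (2 * π * ((j : ℕ) + 1) * t) * Real.cos (2 * π * ((k : ℕ) + 1) * t))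
      = A j * (if (j:ℕ) = (k:ℕ) then 1/2 else 0) := by
    intro j
    rw [← cos_orth (j:ℕ) (k:ℕ)]
    rw [← intervalIntegral.integral_const_mul]
    congr 1
    funext t
    ring
  simp_rw [heval, Fin.val_eq_val, mul_ite, mul_zero] at hint
  rw [Finset.sum_ite_eq' Finset.univ k (fun j => A j * (1/2))] at hint
  simp only [Finset.mem_univ, if_true] at hint
  apply hk
  simpa using hint

private noncomputable def gP (m : ℕ) (B : Fin m → ℝ) (t : ℝ) : ℝ :=
  ∑ j : Fin m, B j * Real.cos (2 * π * ((j : ℕ) + 1) * t)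

private def EP (m : ℕ) (B : Fin m → ℝ) (c : ℝ) : Set ℝ :=
  {t : ℝ | t ∈ Set.Icc (0:ℝ) 1 ∧ c < gP m B t}

private lemma zero_set_null' (m : ℕ) (A : Fin m → ℝ) (hA : A ≠ 0) :
    MeasureTheory.volume {t : ℝ | t ∈ Set.Icc (0:ℝ) 1 ∧ gP m A t = 0} = 0 :=
  zero_set_null m A hA

private lemma gP_cont (m : ℕ) (B : Fin m → ℝ) : Continuous (gP m B) := by
  unfold gP; fun_prop

private lemma EP_meas (m : ℕ) (B : Fin m → ℝ) (c : ℝ) : MeasurableSet (EP m B c) := by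
  have : EP m B c = Set.Icc 0 1 ∩ {t | c < gP m B t} := rfl
  rw [this]
  exact measurableSet_Icc.inter (measurableSet_lt measurable_const (gP_cont m B).measurable)

private lemma EP_fin (m : ℕ) (B : Fin m → ℝ) (c : ℝ) : MeasureTheory.volume (EP m B c) ≠ ⊤ := by
  refine ne_top_of_le_ne_top ?_ (measure_mono (fun t ht => ht.1 : EP m B c ⊆ Set.Icc 0 1))
  simp [Real.volume_Icc]

private lemma gP_bound (m : ℕ) (A B : Fin m → ℝ) (t : ℝ) :
    |gP m B t - gP m A t| ≤ m * dist B A := by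
  unfold gP
  rw [← Finset.sum_sub_distrib]
  refine (Finset.abs_sum_le_sum_abs _ _).trans ?_
  have hstep : ∀ j : Fin m, |B j * Real.cos (2 * π * (((j:ℕ):ℝ) + 1) * t)
      - A j * Real.cos (2 * π * (((j:ℕ):ℝ) + 1) * t)| ≤ dist B A := by
    intro j
    rw [← sub_mul, abs_mul]
    calc |B j - A j| * |Real.cos (2 * π * (((j:ℕ):ℝ) + 1) * t)|
        ≤ |B j - A j| * 1 := mul_le_mul_of_nonneg_left (Real.abs_cos_le_one _) (abs_nonneg _)
      _ = dist (B j) (A j) := by rw [mul_one, Real.dist_eq]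
      _ ≤ dist B A := dist_le_pi_dist B A j
  refine (Finset.sum_le_sum (fun j _ => hstep j)).trans ?_
  apply le_of_eq
  simp [Finset.sum_const, Finset.card_univ, nsmul_eq_mul]

theorem continuity_of_positivity_measure_of_cosine_polynomials
    (m : ℕ) (hm : 0 < m) :
    ContinuousOn
      (fun A : Fin m → ℝ =>
        (MeasureTheory.volume
          {t : ℝ | t ∈ Set.Icc (0 : ℝ) 1 ∧
            0 < ∑ j : Fin m, A j * Real.cos (2 * π * ((j : ℕ) + 1) * t)}).toReal)
      {(0 : Fin m → ℝ)}ᶜ := by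
  intro A hA
  have hA0 : A ≠ 0 := by simpa using hA
  apply ContinuousAt.continuousWithinAt
  have hshow : (fun A : Fin m → ℝ =>
        (MeasureTheory.volume
          {t : ℝ | t ∈ Set.Icc (0 : ℝ) 1 ∧
            0 < ∑ j : Fin m, A j * Real.cos (2 * π * ((j : ℕ) + 1) * t)}).toReal)
      = fun B => (MeasureTheory.volume (EP m B 0)).toReal := rfl
  rw [hshow, Metric.continuousAt_iff]
  intro ε hε
  -- continuity from below
  have hu : (⋃ n : ℕ, EP m A (1/((n:ℝ)+1))) = EP m A 0 := by
    ext t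
    simp only [Set.mem_iUnion]
    constructor
    · rintro ⟨n, ht, hlt⟩
      exact ⟨ht, lt_trans (by positivity) hlt⟩
    · rintro ⟨ht, hlt⟩
      obtain ⟨n, hn⟩ := exists_nat_one_div_lt hlt
      exact ⟨n, ht, hn⟩
  have hmono : Monotone (fun n : ℕ => EP m A (1/((n:ℝ)+1))) := by
    intro a b hab t ht
    refine ⟨ht.1, lt_of_le_of_lt ?_ ht.2⟩
    apply one_div_le_one_div_of_le (by positivity)
    exact_mod_cast by omega
  have ht1 := MeasureTheory.tendsto_measure_iUnion_atTop (μ := MeasureTheory.volume) hmono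
  rw [hu] at ht1
  have h1 : Tendsto (fun n : ℕ => (MeasureTheory.volume (EP m A (1/((n:ℝ)+1)))).toReal) atTop
      (𝓝 ((MeasureTheory.volume (EP m A 0)).toReal)) :=
    (ENNReal.tendsto_toReal (EP_fin m A 0)).comp ht1
  -- continuity from above
  have hi : (⋂ n : ℕ, EP m A (-(1/((n:ℝ)+1))))
      = {t : ℝ | t ∈ Set.Icc (0:ℝ) 1 ∧ 0 ≤ gP m A t} := by
    ext t
    simp only [Set.mem_iInter]
    constructor
    · intro h
      refine ⟨(h 0).1, ?_⟩
      by_contra hneg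
      push_neg at hneg
      obtain ⟨n, hn⟩ := exists_nat_one_div_lt (neg_pos.2 hneg)
      have := (h n).2
      linarith
    · rintro ⟨ht, hnn⟩ n
      exact ⟨ht, lt_of_lt_of_le (neg_lt_zero.mpr (by positivity)) hnn⟩
  have hμF : MeasureTheory.volume {t : ℝ | t ∈ Set.Icc (0:ℝ) 1 ∧ 0 ≤ gP m A t}
      = MeasureTheory.volume (EP m A 0) := by
    apply le_antisymm
    · have hsub : {t : ℝ | t ∈ Set.Icc (0:ℝ) 1 ∧ 0 ≤ gP m A t}
          ⊆ EP m A 0 ∪ {t : ℝ | t ∈ Set.Icc (0:ℝ) 1 ∧ gP m A t = 0} := by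
        rintro t ⟨ht, hnn⟩
        rcases hnn.lt_or_eq with h | h
        · exact Or.inl ⟨ht, h⟩
        · exact Or.inr ⟨ht, h.symm⟩
      refine (measure_mono hsub).trans ?_
      refine (measure_union_le _ _).trans ?_
      rw [zero_set_null' m A hA0, add_zero]
    · exact measure_mono fun t ht => ⟨ht.1, le_of_lt ht.2⟩
  have hanti : Antitone (fun n : ℕ => EP m A (-(1/((n:ℝ)+1)))) := by
    intro a b hab t ht
    refine ⟨ht.1, lt_of_le_of_lt ?_ ht.2⟩
    rw [neg_le_neg_iff]
    apply one_div_le_one_div_of_le (by positivity)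
    exact_mod_cast by omega
  have ht2 := MeasureTheory.tendsto_measure_iInter_atTop (μ := MeasureTheory.volume)
    (fun n => (EP_meas m A _).nullMeasurableSet) hanti ⟨0, EP_fin m A _⟩
  rw [hi, hμF] at ht2
  have h2 : Tendsto (fun n : ℕ => (MeasureTheory.volume (EP m A (-(1/((n:ℝ)+1))))).toReal) atTop
      (𝓝 ((MeasureTheory.volume (EP m A 0)).toReal)) :=
    (ENNReal.tendsto_toReal (EP_fin m A 0)).comp ht2
  set φA := (MeasureTheory.volume (EP m A 0)).toReal with hφA
  obtain ⟨n, hn1, hn2⟩ := ((h1.eventually (eventually_gt_nhds (by linarith : φA - ε < φA))).and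
    (h2.eventually (eventually_lt_nhds (by linarith : φA < φA + ε)))).exists
  refine ⟨1/(((n:ℝ)+1)*((m:ℝ)+1)), by positivity, ?_⟩
  intro B hB
  have hkey : ∀ t : ℝ, |gP m B t - gP m A t| < 1/((n:ℝ)+1) := by
    intro t
    refine lt_of_le_of_lt (gP_bound m A B t) ?_
    have hm1 : (m:ℝ) < (m:ℝ) + 1 := by linarith
    calc (m:ℝ) * dist B A ≤ (m:ℝ) * (1/(((n:ℝ)+1)*((m:ℝ)+1))) := by
          apply mul_le_mul_of_nonneg_left (le_of_lt hB) (by positivity)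
      _ < 1/((n:ℝ)+1) := by
          rw [mul_one_div, div_lt_div_iff₀ (by positivity) (by positivity)]
          nlinarith [Nat.cast_nonneg (α := ℝ) n, Nat.cast_nonneg (α := ℝ) m]
  have hincl1 : EP m A (1/((n:ℝ)+1)) ⊆ EP m B 0 := by
    rintro t ⟨ht, hlt⟩
    refine ⟨ht, ?_⟩
    have := abs_lt.1 (hkey t)
    linarith [this.1]
  have hincl2 : EP m B 0 ⊆ EP m A (-(1/((n:ℝ)+1))) := by
    rintro t ⟨ht, hlt⟩
    refine ⟨ht, ?_⟩
    have := abs_lt.1 (hkey t)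
    linarith [this.2]
  have hle1 : (MeasureTheory.volume (EP m A (1/((n:ℝ)+1)))).toReal
      ≤ (MeasureTheory.volume (EP m B 0)).toReal :=
    (ENNReal.toReal_le_toReal (EP_fin m A _) (EP_fin m B _)).2 (measure_mono hincl1)
  have hle2 : (MeasureTheory.volume (EP m B 0)).toReal
      ≤ (MeasureTheory.volume (EP m A (-(1/((n:ℝ)+1))))).toReal :=
    (ENNReal.toReal_le_toReal (EP_fin m B _) (EP_fin m A _)).2 (measure_mono hincl2)
  rw [Real.dist_eq, abs_lt]
  constructor <;> linarith
end
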